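/- Define h(β) = Φ(−√(nλ) − β·√(n c e^{β²/2})) + Φ(−√(nλ) + β·√(n c e^{β²/2})) for fixed constants n ≥ 1, λ > 0, c > 0. Then h is even, h'(β) > 0 for β > 0, h'(β) < 0 for β < 0, and h'(0) = 0; hence h is strictly increasing in |β| on all of ℝ. -/

import Mathlib

/-!
Write `h β = Φ(-a - g β) + Φ(-a + g β)` with `a = √(nλ)` and `g β = √(nc) · β · e^{β²/4}`.
Since `g` is odd, `h` is even, so `h'` is odd. The chain rule gives
`h' β = g' β · (φ(-a + g β) - φ(-a - g β))` with `g' > 0`, and for `β > 0` the point `-a + g β`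
is closer to the origin than `-a - g β`, so the Gaussian density `φ` is larger there.
Hence `h' > 0` on `(0, ∞)`, and `h` is strictly increasing on `[0, ∞)`, hence in `|β|`.
-/

noncomputable def stdNormalCDF (x : ℝ) : ℝ :=
  ∫ t in Set.Iic x, Real.exp (-t ^ 2 / 2) / Real.sqrt (2 * Real.pi)

open Real MeasureTheory Set ProbabilityTheory

theorem hasDerivAt_integral_Iic {f : ℝ → ℝ} (hf : Integrable f) (hcont : Continuous f) (x : ℝ) :
    HasDerivAt (fun y ↦ ∫ t in Iic y, f t) (f x) x := by
  have hsplit : (fun y ↦ ∫ t in Iic y, f t) = fun y ↦ (∫ t in Iic 0, f t) + ∫ t in 0..y, f t := by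
    funext y
    rw [← intervalIntegral.integral_Iic_sub_Iic hf.integrableOn hf.integrableOn]
    ring
  rw [hsplit]
  exact (intervalIntegral.integral_hasDerivAt_right hf.intervalIntegrable
    (hcont.stronglyMeasurableAtFilter _ _) hcont.continuousAt).const_add _

theorem gaussianPDFReal_lt_of_abs_sub_lt {μ : ℝ} {v : NNReal} (hv : v ≠ 0) {x y : ℝ}
    (h : |x - μ| < |y - μ|) : gaussianPDFReal μ v y < gaussianPDFReal μ v x := by
  have hv' : (0 : ℝ) < v := by positivity
  have hsq : (x - μ) ^ 2 < (y - μ) ^ 2 := sq_lt_sq.2 h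
  unfold gaussianPDFReal
  gcongr ?_ * rexp (?_ / _)
  exact neg_lt_neg hsq

theorem gaussianPDFReal_zero_sub_lt_add {a y : ℝ} (ha : a < 0) (hy : 0 < y) :
    gaussianPDFReal 0 1 (a - y) < gaussianPDFReal 0 1 (a + y) :=
  gaussianPDFReal_lt_of_abs_sub_lt one_ne_zero <| by
    rw [sub_zero, sub_zero, abs_of_neg (by linarith : a - y < 0), abs_lt]
    constructor <;> linarith

theorem stdNormalCDF_eq_integral_gaussianPDFReal :
    stdNormalCDF = fun x ↦ ∫ t in Iic x, gaussianPDFReal 0 1 t := by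
  funext x
  unfold stdNormalCDF gaussianPDFReal
  congr 1 with t
  simp only [sub_zero, NNReal.coe_one, mul_one]
  ring

theorem hasDerivAt_stdNormalCDF (x : ℝ) :
    HasDerivAt stdNormalCDF (gaussianPDFReal 0 1 x) x := by
  rw [stdNormalCDF_eq_integral_gaussianPDFReal]
  exact hasDerivAt_integral_Iic (integrable_gaussianPDFReal 0 1)
    (by unfold gaussianPDFReal; fun_prop) x

theorem HasDerivAt.stdNormalCDF_sub_add_add {g : ℝ → ℝ} {g' β : ℝ} (a : ℝ)
    (hg : HasDerivAt g g' β) :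
    HasDerivAt (fun β ↦ stdNormalCDF (a - g β) + stdNormalCDF (a + g β))
      (g' * (gaussianPDFReal 0 1 (a + g β) - gaussianPDFReal 0 1 (a - g β))) β := by
  have hsub := (hasDerivAt_stdNormalCDF (a - g β)).comp β (hg.const_sub a)
  have hadd := (hasDerivAt_stdNormalCDF (a + g β)).comp β (hg.const_add a)
  exact (hsub.add hadd).congr_deriv (by ring)

theorem Function.Even.deriv {𝕜 F : Type*} [NontriviallyNormedField 𝕜] [NormedAddCommGroup F]
    [NormedSpace 𝕜 F] {f : 𝕜 → F} (hf : f.Even) : (_root_.deriv f).Odd := by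
  intro x
  simpa only [neg_neg, hf.eq] using deriv_comp_neg f (-x)

theorem Function.Even.apply_lt_apply_of_abs_lt {α β : Type*} [AddCommGroup α] [LinearOrder α]
    [IsOrderedAddMonoid α] [Preorder β] {f : α → β} (hf : f.Even)
    (hmono : StrictMonoOn f (Ici 0)) {x y : α} (h : |x| < |y|) : f x < f y := by
  have habs : ∀ z, f |z| = f z := fun z ↦ by
    rcases abs_choice z with hz | hz <;> rw [hz]
    exact hf z
  rw [← habs x, ← habs y]
  exact hmono (abs_nonneg x) (abs_nonneg y) h

theorem hasDerivAt_mul_exp_sq_div_four (β : ℝ) :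
    HasDerivAt (fun β ↦ β * exp (β ^ 2 / 4)) (exp (β ^ 2 / 4) * (1 + β ^ 2 / 2)) β := by
  have hsq : HasDerivAt (fun β : ℝ ↦ β ^ 2 / 4) (β / 2) β :=
    ((hasDerivAt_pow 2 β).div_const 4).congr_deriv (by push_cast; ring)
  exact ((hasDerivAt_id β).mul hsq.exp).congr_deriv (by simp only [id_eq]; ring)

theorem stmt_13 (n : ℕ) (hn : 1 ≤ n) (lam c : ℝ) (hlam : 0 < lam) (hc : 0 < c)
    (h : ℝ → ℝ)
    (hh : ∀ β, h β = stdNormalCDF (-Real.sqrt (n * lam)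
          - β * Real.sqrt (n * c * Real.exp (β ^ 2 / 2)))
        + stdNormalCDF (-Real.sqrt (n * lam)
          + β * Real.sqrt (n * c * Real.exp (β ^ 2 / 2)))) :
    (∀ β, h β = h (-β)) ∧
      (∀ β : ℝ, 0 < β → 0 < deriv h β) ∧
      (∀ β : ℝ, β < 0 → deriv h β < 0) ∧
      deriv h 0 = 0 ∧
      (∀ β₁ β₂ : ℝ, |β₁| < |β₂| → h β₁ < h β₂) := by
  have hn' : (0 : ℝ) < n := by exact_mod_cast hn
  have ha : 0 < √(n * lam) := by positivity
  have hs : 0 < √(n * c) := by positivity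
  set g : ℝ → ℝ := fun β ↦ √(n * c) * (β * exp (β ^ 2 / 4)) with hg
  have hfun : h = fun β ↦ stdNormalCDF (-√(n * lam) - g β) + stdNormalCDF (-√(n * lam) + g β) := by
    funext β
    rw [hh, sqrt_mul (x := n * c) (by positivity), ← exp_half, div_div, hg]
    ring_nf
  have hg_odd : g.Odd := fun β ↦ by
    simp only [hg, neg_sq]
    ring
  have heven : h.Even := fun β ↦ by
    simp only [hfun, hg_odd β, sub_neg_eq_add, ← sub_eq_add_neg]
    ring
  have hD (β : ℝ) : HasDerivAt h (√(n * c) * (exp (β ^ 2 / 4) * (1 + β ^ 2 / 2)) *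
      (gaussianPDFReal 0 1 (-√(n * lam) + g β) - gaussianPDFReal 0 1 (-√(n * lam) - g β))) β := by
    rw [hfun]
    exact ((hasDerivAt_mul_exp_sq_div_four β).const_mul _).stdNormalCDF_sub_add_add _
  have hpos (β : ℝ) (hβ : 0 < β) : 0 < deriv h β := by
    rw [(hD β).deriv]
    exact mul_pos (by positivity)
      (sub_pos.2 (gaussianPDFReal_zero_sub_lt_add (neg_lt_zero.2 ha) (by positivity)))
  have hmono : StrictMonoOn h (Ici 0) :=
    strictMonoOn_of_deriv_pos (convex_Ici 0) (fun β _ ↦ (hD β).continuousAt.continuousWithinAt)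
      (by rw [interior_Ici]; exact hpos)
  refine ⟨fun β ↦ (heven β).symm, hpos, fun β hβ ↦ ?_, heven.deriv.map_zero,
    fun _ _ ↦ heven.apply_lt_apply_of_abs_lt hmono⟩
  simpa only [heven.deriv.eq, neg_pos] using hpos (-β) (neg_pos.2 hβ)
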